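/- Let p > 2 and let φ, B be as defined above. Then for all x,z > 0 with s = x^{1-p}z: B_{xz}(x,z) = (p-2)/(φ(s)-p+3), B_{xx}(x,z) = (p-1)² x^{-p} z² φ'(s)/(φ(s)-p+2)², B_{zz}(x,z) = x^{2-p} φ'(s), and B_{xx}(x,z)·B_{zz}(x,z) = (B_{xz}(x,z) + 1)². -/

import Mathlib

/-!
Write `B = (1 - 1/p) x z G(s)` with `s = x^(1-p) z` and `G = φ + 1/(φ - p + 2)`. The ODE for `φ`
makes the first partials collapse to `B_x = (p - 1) z / (φ(s) - p + 2)` and `B_z = x φ(s)`;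
differentiating these once more gives the second partials, and the ODE again turns
`B_xx B_zz` into `((φ(s) + 1) / (φ(s) - p + 3))^2`.
-/

noncomputable def B2 (p : ℝ) (φ : ℝ → ℝ) (x z : ℝ) : ℝ :=
  (1 - 1 / p) * (x * z) *
    (φ (x ^ (1 - p) * z) + 1 / (φ (x ^ (1 - p) * z) - p + 2))

section HomogeneousProduct

variable {F : ℝ → ℝ} {F' c a x z : ℝ}

theorem HasDerivAt.comp_rpow_mul_const (hx : x ≠ 0) (hF : HasDerivAt F F' (x ^ a * z)) :
    HasDerivAt (fun x' => F (x' ^ a * z)) (a * (x ^ a * z) / x * F') x := by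
  refine (hF.comp x ((Real.hasDerivAt_rpow_const (Or.inl hx)).mul_const z)).congr_deriv ?_
  rw [Real.rpow_sub_one hx]
  ring

theorem hasDerivAt_mul_comp_rpow_mul_left (hx : x ≠ 0) (hF : HasDerivAt F F' (x ^ a * z)) :
    HasDerivAt (fun x' => c * (x' * z) * F (x' ^ a * z))
      (c * z * (F (x ^ a * z) + a * (x ^ a * z) * F')) x := by
  refine ((((hasDerivAt_id x).mul_const z).const_mul c).mul
    (hF.comp_rpow_mul_const hx)).congr_deriv ?_
  simp only [id_eq]
  field_simp

theorem hasDerivAt_mul_comp_rpow_mul_right (hF : HasDerivAt F F' (x ^ a * z)) :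
    HasDerivAt (fun z' => c * (x * z') * F (x ^ a * z'))
      (c * x * (F (x ^ a * z) + x ^ a * z * F')) z := by
  refine ((((hasDerivAt_id z).const_mul x).const_mul c).mul
    (hF.comp z (hasDerivAt_const_mul _))).congr_deriv ?_
  simp only [Function.comp_apply, id_eq]
  ring

end HomogeneousProduct

open Filter Topology

section Bellman

variable {p : ℝ} {φ : ℝ → ℝ} {s x z : ℝ}

theorem hasDerivAt_add_one_div_sub (hp : 1 < p) (hs : 0 < s) (hq : p - 2 < φ s)
    (hφ : HasDerivAt φ ((1 + φ s) * (φ s - p + 2) / ((p - 1) * s * (φ s - p + 3))) s) :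
    HasDerivAt (fun t => φ t + 1 / (φ t - p + 2))
      ((1 + φ s) * (φ s - p + 1) / ((p - 1) * s * (φ s - p + 2))) s := by
  have hq2 : φ s - p + 2 ≠ 0 := by linarith
  have hq3 : φ s - p + 3 ≠ 0 := by linarith
  have hp1 : p - 1 ≠ 0 := by linarith
  refine (hφ.add ((hasDerivAt_const s 1).div ((hφ.sub_const p).add_const 2) hq2)).congr_deriv ?_
  field_simp
  ring

theorem hasDerivAt_B2_left (hp : 1 < p) (hφdom : ∀ s, 0 < s → p - 2 < φ s)
    (hφ' : ∀ s, 0 < s →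
      HasDerivAt φ ((1 + φ s) * (φ s - p + 2) / ((p - 1) * s * (φ s - p + 3))) s)
    (hx : 0 < x) (hz : 0 < z) :
    HasDerivAt (fun x' => B2 p φ x' z) ((p - 1) * z / (φ (x ^ (1 - p) * z) - p + 2)) x := by
  have hs : 0 < x ^ (1 - p) * z := by positivity
  refine (hasDerivAt_mul_comp_rpow_mul_left hx.ne'
    (hasDerivAt_add_one_div_sub hp hs (hφdom _ hs) (hφ' _ hs))).congr_deriv ?_
  have hq := hφdom _ hs
  generalize φ (x ^ (1 - p) * z) = u at hq ⊢
  have hq2 : u - p + 2 ≠ 0 := by linarith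
  have hp0 : p ≠ 0 := by linarith
  have hp1 : p - 1 ≠ 0 := by linarith
  field_simp
  ring

theorem hasDerivAt_B2_right (hp : 1 < p) (hφdom : ∀ s, 0 < s → p - 2 < φ s)
    (hφ' : ∀ s, 0 < s →
      HasDerivAt φ ((1 + φ s) * (φ s - p + 2) / ((p - 1) * s * (φ s - p + 3))) s)
    (hx : 0 < x) (hz : 0 < z) :
    HasDerivAt (fun z' => B2 p φ x z') (x * φ (x ^ (1 - p) * z)) z := by
  have hs : 0 < x ^ (1 - p) * z := by positivity
  refine (hasDerivAt_mul_comp_rpow_mul_right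
    (hasDerivAt_add_one_div_sub hp hs (hφdom _ hs) (hφ' _ hs))).congr_deriv ?_
  have hq := hφdom _ hs
  generalize φ (x ^ (1 - p) * z) = u at hq ⊢
  have hq2 : u - p + 2 ≠ 0 := by linarith
  have hp0 : p ≠ 0 := by linarith
  have hp1 : p - 1 ≠ 0 := by linarith
  field_simp
  ring

theorem hasDerivAt_deriv_B2_left_right (hp : 1 < p) (hφdom : ∀ s, 0 < s → p - 2 < φ s)
    (hφ' : ∀ s, 0 < s →
      HasDerivAt φ ((1 + φ s) * (φ s - p + 2) / ((p - 1) * s * (φ s - p + 3))) s)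
    (hx : 0 < x) (hz : 0 < z) :
    HasDerivAt (fun z' => deriv (fun x' => B2 p φ x' z') x)
      ((p - 2) / (φ (x ^ (1 - p) * z) - p + 3)) z := by
  have hs : 0 < x ^ (1 - p) * z := by positivity
  have hq := hφdom _ hs
  have hq2 : φ (x ^ (1 - p) * z) - p + 2 ≠ 0 := by linarith
  have hBx : (fun z' => deriv (fun x' => B2 p φ x' z') x) =ᶠ[𝓝 z]
      fun z' => (p - 1) * z' / (φ (x ^ (1 - p) * z') - p + 2) :=
    (eventually_gt_nhds hz).mono fun z' hz' => (hasDerivAt_B2_left hp hφdom hφ' hx hz').deriv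
  refine HasDerivAt.congr_of_eventuallyEq ?_ hBx
  refine (((hasDerivAt_id z).const_mul (p - 1)).div
    ((((hφ' _ hs).comp z (hasDerivAt_const_mul _)).sub_const p).add_const 2) hq2).congr_deriv ?_
  simp only [Function.comp_apply, id_eq]
  generalize φ (x ^ (1 - p) * z) = u at hq hq2 ⊢
  have hq3 : u - p + 3 ≠ 0 := by linarith
  have hp1 : p - 1 ≠ 0 := by linarith
  field_simp
  ring

theorem hasDerivAt_deriv_B2_left_left (hp : 1 < p) (hφdom : ∀ s, 0 < s → p - 2 < φ s)
    (hφ' : ∀ s, 0 < s →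
      HasDerivAt φ ((1 + φ s) * (φ s - p + 2) / ((p - 1) * s * (φ s - p + 3))) s)
    (hx : 0 < x) (hz : 0 < z) :
    HasDerivAt (fun x' => deriv (fun t => B2 p φ t z) x')
      ((p - 1) ^ 2 * x ^ (-p) * z ^ 2 * deriv φ (x ^ (1 - p) * z)
        / (φ (x ^ (1 - p) * z) - p + 2) ^ 2) x := by
  have hs : 0 < x ^ (1 - p) * z := by positivity
  have hq2 : φ (x ^ (1 - p) * z) - p + 2 ≠ 0 := by linarith [hφdom _ hs]
  have hBx : (fun x' => deriv (fun t => B2 p φ t z) x') =ᶠ[𝓝 x]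
      fun x' => (p - 1) * z / (φ (x' ^ (1 - p) * z) - p + 2) :=
    (eventually_gt_nhds hx).mono fun x' hx' => (hasDerivAt_B2_left hp hφdom hφ' hx' hz).deriv
  refine HasDerivAt.congr_of_eventuallyEq ?_ hBx
  refine ((hasDerivAt_const x ((p - 1) * z)).div
    ((((hφ' _ hs).differentiableAt.hasDerivAt.comp_rpow_mul_const hx.ne').sub_const p).add_const 2)
    hq2).congr_deriv ?_
  rw [show -p = 1 - p - 1 by ring, Real.rpow_sub_one hx.ne']
  ring

theorem hasDerivAt_deriv_B2_right_right (hp : 1 < p) (hφdom : ∀ s, 0 < s → p - 2 < φ s)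
    (hφ' : ∀ s, 0 < s →
      HasDerivAt φ ((1 + φ s) * (φ s - p + 2) / ((p - 1) * s * (φ s - p + 3))) s)
    (hx : 0 < x) (hz : 0 < z) :
    HasDerivAt (fun z' => deriv (fun t => B2 p φ x t) z')
      (x ^ (2 - p) * deriv φ (x ^ (1 - p) * z)) z := by
  have hs : 0 < x ^ (1 - p) * z := by positivity
  have hBz : (fun z' => deriv (fun t => B2 p φ x t) z') =ᶠ[𝓝 z]
      fun z' => x * φ (x ^ (1 - p) * z') :=
    (eventually_gt_nhds hz).mono fun z' hz' => (hasDerivAt_B2_right hp hφdom hφ' hx hz').deriv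
  refine HasDerivAt.congr_of_eventuallyEq ?_ hBz
  refine (((hφ' _ hs).differentiableAt.hasDerivAt.comp z
    (hasDerivAt_const_mul _)).const_mul x).congr_deriv ?_
  rw [show 2 - p = 1 - p + 1 by ring, Real.rpow_add_one hx.ne']
  ring

theorem B2_xx_mul_zz_eq_sq_xz_add_one (hp : 1 < p) (hx : 0 < x) (hz : 0 < z)
    (hq : p - 2 < φ (x ^ (1 - p) * z))
    (hφ : HasDerivAt φ ((1 + φ (x ^ (1 - p) * z)) * (φ (x ^ (1 - p) * z) - p + 2) /
      ((p - 1) * (x ^ (1 - p) * z) * (φ (x ^ (1 - p) * z) - p + 3))) (x ^ (1 - p) * z)) :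
    ((p - 1) ^ 2 * x ^ (-p) * z ^ 2 * deriv φ (x ^ (1 - p) * z)
        / (φ (x ^ (1 - p) * z) - p + 2) ^ 2) *
      (x ^ (2 - p) * deriv φ (x ^ (1 - p) * z))
      = ((p - 2) / (φ (x ^ (1 - p) * z) - p + 3) + 1) ^ 2 := by
  rw [hφ.deriv, show -p = 1 - p - 1 by ring, show 2 - p = 1 - p + 1 by ring,
    Real.rpow_sub_one hx.ne', Real.rpow_add_one hx.ne']
  have hX : x ^ (1 - p) ≠ 0 := by positivity
  generalize φ (x ^ (1 - p) * z) = u at hq ⊢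
  have hq2 : u - p + 2 ≠ 0 := by linarith
  have hq3 : u - p + 3 ≠ 0 := by linarith
  have hp1 : p - 1 ≠ 0 := by linarith
  field_simp
  ring

end Bellman

theorem stmt_17_general (p : ℝ) (hp : 2 < p) (φ : ℝ → ℝ)
    (hφdom : ∀ s, 0 < s → p - 2 < φ s)
    (hφ' : ∀ s, 0 < s →
      HasDerivAt φ ((1 + φ s) * (φ s - p + 2) / ((p - 1) * s * (φ s - p + 3))) s) :
    ∀ x z : ℝ, 0 < x → 0 < z →
      HasDerivAt (fun z' => deriv (fun x' => B2 p φ x' z') x)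
        ((p - 2) / (φ (x ^ (1 - p) * z) - p + 3)) z ∧
      HasDerivAt (fun x' => deriv (fun t => B2 p φ t z) x')
        ((p - 1) ^ 2 * x ^ (-p) * z ^ 2 * deriv φ (x ^ (1 - p) * z)
          / (φ (x ^ (1 - p) * z) - p + 2) ^ 2) x ∧
      HasDerivAt (fun z' => deriv (fun t => B2 p φ x t) z')
        (x ^ (2 - p) * deriv φ (x ^ (1 - p) * z)) z ∧
      ((p - 1) ^ 2 * x ^ (-p) * z ^ 2 * deriv φ (x ^ (1 - p) * z)
          / (φ (x ^ (1 - p) * z) - p + 2) ^ 2) *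
        (x ^ (2 - p) * deriv φ (x ^ (1 - p) * z))
        = ((p - 2) / (φ (x ^ (1 - p) * z) - p + 3) + 1) ^ 2 := by
  intro x z hx hz
  have hp1 : 1 < p := by linarith
  have hs : 0 < x ^ (1 - p) * z := by positivity
  exact ⟨hasDerivAt_deriv_B2_left_right hp1 hφdom hφ' hx hz,
    hasDerivAt_deriv_B2_left_left hp1 hφdom hφ' hx hz,
    hasDerivAt_deriv_B2_right_right hp1 hφdom hφ' hx hz,
    B2_xx_mul_zz_eq_sq_xz_add_one hp1 hx hz (hφdom _ hs) (hφ' _ hs)⟩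

theorem stmt_17 (p : ℝ) (hp : 2 < p) (φ : ℝ → ℝ)
    (hφdom : ∀ s, 0 < s → p - 2 < φ s)
    (hφ : ∀ s, 0 < s →
      p * (1 - 1 / p) ^ (p - 1) * (1 + φ s) ^ (p - 2) * (φ s - p + 2) = s)
    (hφ' : ∀ s, 0 < s →
      HasDerivAt φ ((1 + φ s) * (φ s - p + 2) / ((p - 1) * s * (φ s - p + 3))) s) :
    ∀ x z : ℝ, 0 < x → 0 < z →
      HasDerivAt (fun z' => deriv (fun x' => B2 p φ x' z') x)
        ((p - 2) / (φ (x ^ (1 - p) * z) - p + 3)) z ∧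
      HasDerivAt (fun x' => deriv (fun t => B2 p φ t z) x')
        ((p - 1) ^ 2 * x ^ (-p) * z ^ 2 * deriv φ (x ^ (1 - p) * z)
          / (φ (x ^ (1 - p) * z) - p + 2) ^ 2) x ∧
      HasDerivAt (fun z' => deriv (fun t => B2 p φ x t) z')
        (x ^ (2 - p) * deriv φ (x ^ (1 - p) * z)) z ∧
      ((p - 1) ^ 2 * x ^ (-p) * z ^ 2 * deriv φ (x ^ (1 - p) * z)
          / (φ (x ^ (1 - p) * z) - p + 2) ^ 2) *
        (x ^ (2 - p) * deriv φ (x ^ (1 - p) * z))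
        = ((p - 2) / (φ (x ^ (1 - p) * z) - p + 3) + 1) ^ 2 :=
  stmt_17_general p hp φ hφdom hφ'
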